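/- Let C be a locally noetherian Grothendieck category and M an object of C. Then M is injective if and only if the contravariant functor Hom_C(−, M) restricted to the full subcategory of finitely generated objects is exact. -/

import Mathlib

open CategoryTheory Limits CompleteLattice

universe v u

/-- The definition of a compact element of a complete lattice as it stood in Mathlib
(December 2024), before `IsCompactElement` was moved and redefined. -/
def CompleteLattice.IsCompactElement {α : Type*} [CompleteLattice α] (k : α) : Prop :=
  ∀ s : Set α, k ≤ sSup s → ∃ t : Finset α, ↑t ⊆ s ∧ k ≤ t.sup id

/-- An object of a category is *finitely generated* if the top element of its
lattice of subobjects is a compact element. -/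
def CategoryTheory.FGObject {C : Type u} [Category.{v} C] [Abelian C] [HasLimits C]
    [HasColimits C] [WellPowered.{v} C] (X : C) : Prop :=
  @CompleteLattice.IsCompactElement _ Subobject.instCompleteLattice.{v} (⊤ : Subobject X)

set_option linter.unusedSectionVars false

namespace InjFGAux

section A


variable {C : Type u} [Category.{v} C] [Abelian C]

/-- Transfer `WellFoundedGT` of subobject lattices along a monomorphism. -/
lemma wfgt_of_mono {V X : C} (m : V ⟶ X) [Mono m] (hX : WellFoundedGT (Subobject X)) :
    WellFoundedGT (Subobject V) := by
  letI := hX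
  let emb : Subobject V ↪o Subobject X := OrderEmbedding.ofMapLEIff
    (fun D : Subobject V => Subobject.mk (D.arrow ≫ m)) (fun D₁ D₂ => by
      constructor
      · intro hle
        have ht := Subobject.ofMkLEMk_comp hle
        rw [← Category.assoc] at ht
        exact Subobject.le_of_comm _ ((cancel_mono m).1 ht)
      · intro hle
        exact Subobject.mk_le_mk_of_comm (Subobject.ofLE _ _ hle) (by simp))
  exact emb.wellFoundedGT

/-- Transfer `WellFoundedGT` of subobject lattices along an epimorphism. -/
lemma wfgt_of_epi {X Q : C} (π : X ⟶ Q) [Epi π] (hX : WellFoundedGT (Subobject X)) :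
    WellFoundedGT (Subobject Q) := by
  letI := hX
  let emb : Subobject Q ↪o Subobject X := OrderEmbedding.ofMapLEIff
    (fun D : Subobject Q => Subobject.mk (pullback.snd D.arrow π)) (fun D₁ D₂ => by
      constructor
      · intro hle
        have ht : Subobject.ofMkLEMk _ _ hle ≫ pullback.snd D₂.arrow π =
            pullback.snd D₁.arrow π := Subobject.ofMkLEMk_comp hle
        have ht' := reassoc_of% ht
        have hker : kernel.ι (pullback.fst D₁.arrow π) ≫
            (Subobject.ofMkLEMk _ _ hle ≫ pullback.fst D₂.arrow π) = 0 := by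
          rw [← cancel_mono D₂.arrow]
          simp only [Category.assoc, zero_comp]
          rw [pullback.condition, ht', ← pullback.condition, ← Category.assoc,
            kernel.condition, zero_comp]
        refine Subobject.le_of_comm (Abelian.epiDesc (pullback.fst D₁.arrow π) _ hker) ?_
        rw [← cancel_epi (pullback.fst D₁.arrow π), ← Category.assoc, Abelian.comp_epiDesc,
          Category.assoc, pullback.condition, ← Category.assoc, ht, ← pullback.condition]
      · intro hle
        exact Subobject.mk_le_mk_of_comm
          (pullback.lift (pullback.fst _ _ ≫ Subobject.ofLE _ _ hle) (pullback.snd _ _)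
            (by rw [Category.assoc, Subobject.ofLE_arrow, pullback.condition]))
          (pullback.lift_snd _ _ _))
  exact emb.wellFoundedGT

variable [HasLimits C] [HasColimits C] [WellPowered.{v} C]

lemma fg_of_wfgt (X : C) (hX : WellFoundedGT (Subobject X)) : FGObject X := by
  letI := hX
  letI : CompleteLattice (Subobject X) := Subobject.instCompleteLattice.{v}
  exact (isCompactElement_iff_exists_le_sSup_of_le_sSup (Subobject X) ⊤).1
    ((isSupFiniteCompact_iff_all_elements_compact (Subobject X)).1
    (WellFoundedGT.isSupFiniteCompact (Subobject X)) ⊤)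


end A

section B

variable {C : Type u} [Category.{v} C] [Abelian C] [HasLimits C] [HasColimits C]
  [WellPowered.{v} C]

/-- A partial extension of `g : X ⟶ M` along the mono `f : X ⟶ Y`. -/
structure PExt {X Y : C} (M : C) (f : X ⟶ Y) [Mono f] (g : X ⟶ M) : Type (max u v) where
  A : Subobject Y
  le : Subobject.mk f ≤ A
  h : (A : C) ⟶ M
  comm : Subobject.ofMkLE f A le ≫ h = g

variable {X Y M : C} {f : X ⟶ Y} [Mono f] {g : X ⟶ M}

instance : PartialOrder (PExt M f g) where
  le e₁ e₂ := ∃ hle : e₁.A ≤ e₂.A, Subobject.ofLE _ _ hle ≫ e₂.h = e₁.h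
  le_refl e := ⟨le_rfl, by rw [Subobject.ofLE_refl, Category.id_comp]⟩
  le_trans e₁ e₂ e₃ := fun ⟨h12, c12⟩ ⟨h23, c23⟩ =>
    ⟨h12.trans h23, by
      rw [← Subobject.ofLE_comp_ofLE _ _ _ h12 h23, Category.assoc, c23, c12]⟩
  le_antisymm e₁ e₂ h12 h21 := by
    obtain ⟨hA12, hc12⟩ := h12
    obtain ⟨hA21, _⟩ := h21
    obtain ⟨A₁, le₁, h₁, comm₁⟩ := e₁
    obtain ⟨A₂, le₂, h₂, comm₂⟩ := e₂
    dsimp at hA12 hA21 hc12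
    obtain rfl : A₁ = A₂ := le_antisymm hA12 hA21
    obtain rfl : h₁ = h₂ := by rw [← hc12, Subobject.ofLE_refl, Category.id_comp]
    rfl

lemma PExt.eq_of_le_of_A_eq {e₁ e₂ : PExt M f g} (hle : e₁ ≤ e₂) (hA : e₁.A = e₂.A) :
    e₁ = e₂ := by
  obtain ⟨hA12, hc12⟩ := hle
  obtain ⟨A₁, le₁, h₁, comm₁⟩ := e₁
  obtain ⟨A₂, le₂, h₂, comm₂⟩ := e₂
  dsimp at hA hc12
  subst hA
  obtain rfl : h₁ = h₂ := by rw [← hc12, Subobject.ofLE_refl, Category.id_comp]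
  rfl

variable [AB5 C]

lemma chain_bddAbove (c : Set (PExt M f g)) (hchain : IsChain (· ≤ ·) c)
    (hne : c.Nonempty) : BddAbove c := by
  classical
  obtain ⟨e₀, he₀⟩ := hne
  -- the index category
  haveI hsmall : Small.{v} ↥c := by
    refine small_of_injective (f := fun e : ↥c => (e : PExt M f g).A) ?_
    rintro ⟨e₁, he₁⟩ ⟨e₂, he₂⟩ hA
    dsimp at hA
    ext1
    rcases eq_or_ne e₁ e₂ with h | h
    · exact h
    · rcases hchain he₁ he₂ h with hle | hle
      · exact PExt.eq_of_le_of_A_eq hle hA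
      · exact (PExt.eq_of_le_of_A_eq hle hA.symm).symm
  let J := Shrink.{v} ↥c
  let eqv : J ≃ ↥c := (equivShrink ↥c).symm
  letI : Preorder J := Preorder.lift (fun j => ((eqv j : ↥c) : PExt M f g))
  letI : SmallCategory J := Preorder.smallCategory J
  haveI : Nonempty J := ⟨equivShrink ↥c ⟨e₀, he₀⟩⟩
  haveI : IsDirected J (· ≤ ·) := ⟨fun j₁ j₂ => by
    rcases eq_or_ne (eqv j₁) (eqv j₂) with h | h
    · exact ⟨j₂, show ((eqv j₁ : ↥c) : PExt M f g) ≤ ((eqv j₂ : ↥c) : PExt M f g) from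
        le_of_eq (congrArg Subtype.val h), le_rfl⟩
    · rcases hchain (eqv j₁).2 (eqv j₂).2 (fun hh => h (Subtype.ext hh)) with hle | hle
      · exact ⟨j₂, hle, le_rfl⟩
      · exact ⟨j₁, le_rfl, hle⟩⟩
  have toLe : ∀ {j₁ j₂ : J} (φ : j₁ ⟶ j₂),
      ((eqv j₁ : ↥c) : PExt M f g) ≤ ((eqv j₂ : ↥c) : PExt M f g) :=
    fun {j₁ j₂} φ => (leOfHom φ : j₁ ≤ j₂)
  -- the diagram of subobjects
  let F : J ⥤ C :=
    { obj := fun j => ((eqv j : ↥c) : PExt M f g).A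
      map := fun {j₁ j₂} φ => Subobject.ofLE _ _ (toLe φ).choose
      map_id := fun j => by ext; simp
      map_comp := fun φ ψ => by ext; simp }
  -- the natural transformation to the constant functor at `Y`
  let α : F ⟶ (Functor.const J).obj Y :=
    { app := fun j => ((eqv j : ↥c) : PExt M f g).A.arrow
      naturality := fun j₁ j₂ φ => by dsimp [F]; try simp }
  -- the constant cocone at `Y` is a colimit
  let cY : Cocone ((Functor.const J).obj Y) := ⟨Y, ⟨fun j => 𝟙 Y, by intros; dsimp; try simp⟩⟩
  have key : ∀ (s : Cocone ((Functor.const J).obj Y)) (j j' : J), s.ι.app j = s.ι.app j' := by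
    intro s j j'
    have h1 := s.ι.naturality (IsFiltered.leftToMax j j')
    have h2 := s.ι.naturality (IsFiltered.rightToMax j j')
    dsimp at h1 h2
    rw [Category.id_comp, Category.comp_id] at h1 h2
    rw [← h1, h2]
  have hcY : IsColimit cY :=
    { desc := fun s => s.ι.app (Classical.arbitrary J)
      fac := fun s j => by
        show 𝟙 Y ≫ s.ι.app (Classical.arbitrary J) = s.ι.app j
        rw [Category.id_comp]; exact key s _ _
      uniq := fun s m hm => by
        have h0 := hm (Classical.arbitrary J)
        dsimp [cY] at h0
        rw [Category.id_comp] at h0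
        exact h0 }
  -- the induced mono into Y
  haveI : ∀ j, Mono (α.app j) := fun j =>
    inferInstanceAs (Mono ((eqv j : ↥c) : PExt M f g).A.arrow)
  haveI : Mono α := NatTrans.mono_of_mono_app α
  haveI : Mono (colim.map α) := Functor.map_mono colim α
  let t : colimit F ⟶ Y := colimit.desc F ⟨Y, α⟩
  have ht : t = colim.map α ≫ (colimit.isoColimitCocone ⟨cY, hcY⟩).hom := by
    apply colimit.hom_ext
    intro j
    simp [t, cY]
  haveI : Mono t := by rw [ht]; infer_instance
  -- the map from the colimit subobject to M
  let β : F ⟶ (Functor.const J).obj M :=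
    { app := fun j => ((eqv j : ↥c) : PExt M f g).h
      naturality := fun j₁ j₂ φ => by
        dsimp [F]
        rw [Category.comp_id]
        exact (toLe φ).choose_spec }
  let hplus : ((Subobject.mk t : Subobject Y) : C) ⟶ M :=
    (Subobject.underlyingIso t).hom ≫ colimit.desc F ⟨M, β⟩
  -- each element of the chain maps into the colimit subobject compatibly
  have hcomp : ∀ j : J, ∃ hle : ((eqv j : ↥c) : PExt M f g).A ≤ Subobject.mk t,
      Subobject.ofLE _ _ hle ≫ hplus = ((eqv j : ↥c) : PExt M f g).h := by
    intro j
    have hw : colimit.ι F j ≫ t = ((eqv j : ↥c) : PExt M f g).A.arrow := colimit.ι_desc _ _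
    have hle : ((eqv j : ↥c) : PExt M f g).A ≤ Subobject.mk t :=
      Subobject.le_mk_of_comm (colimit.ι F j) hw
    refine ⟨hle, ?_⟩
    have heq : Subobject.ofLE _ _ hle =
        colimit.ι F j ≫ (Subobject.underlyingIso t).inv := by
      rw [← cancel_mono (Subobject.mk t).arrow]
      simp [hw]
    rw [heq]
    simp [hplus, β]
  -- assemble the upper bound
  let j₀ : J := equivShrink ↥c ⟨e₀, he₀⟩
  have heqv₀ : eqv j₀ = ⟨e₀, he₀⟩ := (equivShrink ↥c).symm_apply_apply _
  have h0 := hcomp j₀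
  rw [heqv₀] at h0
  obtain ⟨hle₀, hcomp₀⟩ := h0
  have hmkle : Subobject.mk f ≤ Subobject.mk t := e₀.le.trans hle₀
  let ub : PExt M f g :=
    { A := Subobject.mk t
      le := hmkle
      h := hplus
      comm := by
        have hdec : Subobject.ofMkLE f (Subobject.mk t) hmkle =
            Subobject.ofMkLE f e₀.A e₀.le ≫ Subobject.ofLE _ _ hle₀ := by
          rw [← cancel_mono (Subobject.mk t).arrow]
          simp
        rw [hdec, Category.assoc, hcomp₀, e₀.comm] }
  refine ⟨ub, fun e he => ?_⟩
  have := hcomp (equivShrink ↥c ⟨e, he⟩)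
  rw [(equivShrink ↥c).symm_apply_apply] at this
  exact this


end B

section D
variable {C : Type u} [Category.{v} C] [Abelian C] [HasLimits C] [HasColimits C]
  [WellPowered.{v} C]

lemma baer_step {M Y G0 : C} (hG : WellFoundedGT (Subobject G0))
    (hyp : ∀ S : ShortComplex C, S.ShortExact →
        FGObject S.X₁ → FGObject S.X₂ → FGObject S.X₃ →
        (Function.Injective (fun g : S.X₃ ⟶ M => S.g ≫ g) ∧
         Function.Exact (fun g : S.X₃ ⟶ M => S.g ≫ g)
           (fun g : S.X₂ ⟶ M => S.f ≫ g) ∧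
         Function.Surjective (fun g : S.X₂ ⟶ M => S.f ≫ g)))
    (A : Subobject Y) (u : G0 ⟶ Y) (h : (A : C) ⟶ M) :
    ∃ k : G0 ⟶ M, pullback.snd A.arrow u ≫ k = pullback.fst A.arrow u ≫ h := by
  let S : ShortComplex C := ShortComplex.mk (pullback.snd A.arrow u)
    (cokernel.π (pullback.snd A.arrow u)) (cokernel.condition _)
  have hS : S.ShortExact := by
    refine ShortComplex.ShortExact.mk' ?_ ?_ ?_
    · exact S.exact_of_g_is_cokernel (cokernelIsCokernel _)
    · exact inferInstanceAs (Mono (pullback.snd A.arrow u))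
    · exact inferInstanceAs (Epi (cokernel.π _))
  obtain ⟨k, hk⟩ := (hyp S hS
    (fg_of_wfgt _ (wfgt_of_mono (pullback.snd A.arrow u) hG))
    (fg_of_wfgt _ hG)
    (fg_of_wfgt _ (wfgt_of_epi (cokernel.π _) hG))).2.2
    (pullback.fst A.arrow u ≫ h)
  exact ⟨k, hk⟩

lemma biprod_desc_eq {P Q R : C} (a : P ⟶ R) (b : Q ⟶ R) {W : C} (κ : W ⟶ P ⊞ Q) :
    κ ≫ biprod.desc a b = (κ ≫ biprod.fst) ≫ a + (κ ≫ biprod.snd) ≫ b := by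
  calc κ ≫ biprod.desc a b
      = κ ≫ (biprod.fst ≫ biprod.inl + biprod.snd ≫ biprod.inr) ≫ biprod.desc a b := by
        rw [biprod.total, Category.id_comp]
    _ = _ := by
        simp only [Preadditive.add_comp, Preadditive.comp_add, Category.assoc,
          biprod.inl_desc, biprod.inr_desc]

lemma kernel_vanish {Y M G0 : C} (A : Subobject Y) (u : G0 ⟶ Y) (h : (A : C) ⟶ M)
    (I : Subobject Y) (e₀ : G0 ⟶ (I : C)) [Epi e₀] (harr : e₀ ≫ I.arrow = u)
    (k : G0 ⟶ M) (hk : pullback.snd A.arrow u ≫ k = pullback.fst A.arrow u ≫ h)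
    (k' : (I : C) ⟶ M) (hk' : e₀ ≫ k' = k)
    {W₀ : C} (κ : W₀ ⟶ (A : C) ⊞ (I : C))
    (hκ : κ ≫ biprod.desc A.arrow I.arrow = 0) : κ ≫ biprod.desc h k' = 0 := by
  have hsum : κ ≫ biprod.fst ≫ A.arrow + κ ≫ biprod.snd ≫ I.arrow = 0 := by
    have := hκ
    rw [biprod_desc_eq] at this
    simpa only [Category.assoc] using this
  have hw : pullback.fst (κ ≫ biprod.snd) e₀ ≫ κ ≫ biprod.snd =
      pullback.snd (κ ≫ biprod.snd) e₀ ≫ e₀ := pullback.condition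
  have hw' := reassoc_of% hw
  have hsum2 : pullback.fst (κ ≫ biprod.snd) e₀ ≫ κ ≫ biprod.fst ≫ A.arrow +
      pullback.fst (κ ≫ biprod.snd) e₀ ≫ κ ≫ biprod.snd ≫ I.arrow = 0 := by
    rw [← Preadditive.comp_add, hsum, comp_zero]
  have hneg : pullback.fst (κ ≫ biprod.snd) e₀ ≫ κ ≫ biprod.snd ≫ I.arrow =
      -(pullback.fst (κ ≫ biprod.snd) e₀ ≫ κ ≫ biprod.fst ≫ A.arrow) :=
    eq_neg_of_add_eq_zero_right hsum2
  have hru : (-(pullback.fst (κ ≫ biprod.snd) e₀ ≫ κ ≫ biprod.fst)) ≫ A.arrow =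
      pullback.snd (κ ≫ biprod.snd) e₀ ≫ u := by
    rw [Preadditive.neg_comp]
    simp only [Category.assoc]
    rw [← hneg, hw', harr]
  have t2 : pullback.fst (κ ≫ biprod.snd) e₀ ≫ κ ≫ biprod.snd ≫ k' =
      -(pullback.fst (κ ≫ biprod.snd) e₀ ≫ κ ≫ biprod.fst ≫ h) := by
    calc pullback.fst (κ ≫ biprod.snd) e₀ ≫ κ ≫ biprod.snd ≫ k'
        = pullback.snd (κ ≫ biprod.snd) e₀ ≫ e₀ ≫ k' := hw' k'
      _ = pullback.snd (κ ≫ biprod.snd) e₀ ≫ k := by rw [hk']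
      _ = (pullback.lift _ _ hru ≫ pullback.snd A.arrow u) ≫ k := by
          rw [pullback.lift_snd]
      _ = pullback.lift _ _ hru ≫ pullback.snd A.arrow u ≫ k := by
          simp only [Category.assoc]
      _ = pullback.lift _ _ hru ≫ pullback.fst A.arrow u ≫ h := by rw [hk]
      _ = (pullback.lift _ _ hru ≫ pullback.fst A.arrow u) ≫ h := by
          simp only [Category.assoc]
      _ = (-(pullback.fst (κ ≫ biprod.snd) e₀ ≫ κ ≫ biprod.fst)) ≫ h := by
          rw [pullback.lift_fst]
      _ = -(pullback.fst (κ ≫ biprod.snd) e₀ ≫ κ ≫ biprod.fst ≫ h) := by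
          rw [Preadditive.neg_comp]; simp only [Category.assoc]
  rw [biprod_desc_eq, ← cancel_epi (pullback.fst (κ ≫ biprod.snd) e₀),
    Preadditive.comp_add, comp_zero]
  simp only [Category.assoc]
  rw [t2]
  exact add_neg_cancel _

end D

end InjFGAux

open InjFGAux

/-- Let `C` be a locally noetherian Grothendieck category (a Grothendieck
category with a family of noetherian generators) and `M` an object of `C`.
Then `M` is injective if and only if the contravariant functor `Hom_C(-, M)`
restricted to finitely generated objects is exact, i.e. it takes every short
exact sequence `0 → X₁ → X₂ → X₃ → 0` of finitely generated objects to a short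
exact sequence `0 → Hom(X₃, M) → Hom(X₂, M) → Hom(X₁, M) → 0` of abelian
groups. -/
theorem injective_iff_hom_restricted_to_fg_exact
    {C : Type u} [Category.{v} C] [Abelian C] [HasLimits C] [HasColimits C]
    [AB5 C] [WellPowered.{v} C]
    {ι : Type v} (G : ι → C) (hnoeth : ∀ i, WellFoundedGT (Subobject (G i)))
    (hgen : ∀ (A : C) (B : Subobject A), B ≠ ⊤ →
      ∃ (i : ι) (u : G i ⟶ A), ¬ B.Factors u)
    (M : C) :
    Injective M ↔
      ∀ S : ShortComplex C, S.ShortExact →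
        FGObject S.X₁ → FGObject S.X₂ → FGObject S.X₃ →
        (Function.Injective (fun g : S.X₃ ⟶ M => S.g ≫ g) ∧
         Function.Exact (fun g : S.X₃ ⟶ M => S.g ≫ g)
           (fun g : S.X₂ ⟶ M => S.f ≫ g) ∧
         Function.Surjective (fun g : S.X₂ ⟶ M => S.f ≫ g)) := by
  constructor
  · -- the easy direction
    intro hM S hS _ _ _
    haveI := hS.mono_f
    haveI := hS.epi_g
    refine ⟨fun a b hab => (cancel_epi S.g).1 hab, fun φ => ?_, fun φ =>
      ⟨Injective.factorThru φ S.f, Injective.comp_factorThru φ S.f⟩⟩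
    constructor
    · intro hφ
      exact ⟨hS.exact.desc φ hφ, hS.exact.g_desc φ hφ⟩
    · rintro ⟨ψ, rfl⟩
      show S.f ≫ S.g ≫ ψ = 0
      rw [← Category.assoc, S.zero, zero_comp]
  · -- the hard direction
    intro hyp
    constructor
    intro X' Y' g' f' hf'
    -- Zorn's lemma provides a maximal partial extension
    haveI : Nonempty (PExt M f' g') := ⟨⟨Subobject.mk f', le_rfl,
      (Subobject.underlyingIso f').hom ≫ g', by
        dsimp [Subobject.ofMkLE]
        rw [Subobject.ofLE_refl]
        simp⟩⟩
    obtain ⟨m, hmax⟩ : ∃ m : PExt M f' g', IsMax m :=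
      zorn_le_nonempty (fun c hc hne => chain_bddAbove c hc hne)
    obtain ⟨A, hle, h, hcomm⟩ := m
    by_cases htop : A = ⊤
    · -- if the maximal extension is defined on all of Y', we are done
      subst htop
      refine ⟨inv ((⊤ : Subobject Y').arrow) ≫ h, ?_⟩
      have hdec : f' ≫ inv ((⊤ : Subobject Y').arrow) = Subobject.ofMkLE f' ⊤ hle := by
        rw [← cancel_mono ((⊤ : Subobject Y').arrow)]
        simp
      rw [← Category.assoc, hdec, hcomm]
    · -- otherwise, we can strictly enlarge the maximal extension, a contradiction
      exfalso
      obtain ⟨i₀, u, hu⟩ := hgen Y' A htop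
      obtain ⟨k, hk⟩ := baer_step (hnoeth i₀) hyp A u h
      have harr : factorThruImageSubobject u ≫ (imageSubobject u).arrow = u :=
        imageSubobject_arrow_comp u
      -- k kills the kernel of the image factorization
      have hκk : kernel.ι (factorThruImageSubobject u) ≫ k = 0 := by
        have hκu : kernel.ι (factorThruImageSubobject u) ≫ u = 0 := by
          calc kernel.ι (factorThruImageSubobject u) ≫ u
              = (kernel.ι (factorThruImageSubobject u) ≫ factorThruImageSubobject u) ≫
                  (imageSubobject u).arrow := by rw [Category.assoc, harr]
            _ = 0 := by rw [kernel.condition, zero_comp]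
        have hl : (0 : kernel (factorThruImageSubobject u) ⟶ (A : C)) ≫ A.arrow =
            kernel.ι (factorThruImageSubobject u) ≫ u := by rw [zero_comp, hκu]
        have hlift : kernel.ι (factorThruImageSubobject u) =
            pullback.lift 0 (kernel.ι (factorThruImageSubobject u)) hl ≫
              pullback.snd A.arrow u := (pullback.lift_snd _ _ _).symm
        rw [hlift, Category.assoc, hk, ← Category.assoc, pullback.lift_fst, zero_comp]
      -- descend k to the image subobject
      have hk' : factorThruImageSubobject u ≫
          Abelian.epiDesc (factorThruImageSubobject u) k hκk = k :=
        Abelian.comp_epiDesc _ _ _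
      -- ψ kills the kernel of factorThruImage φ
      have hker2 : kernel.ι (factorThruImage (biprod.desc A.arrow (imageSubobject u).arrow)) ≫
          biprod.desc h (Abelian.epiDesc (factorThruImageSubobject u) k hκk) = 0 := by
        have hσφ : kernel.ι (factorThruImage (biprod.desc A.arrow (imageSubobject u).arrow)) ≫
            biprod.desc A.arrow (imageSubobject u).arrow = 0 := by
          calc kernel.ι (factorThruImage (biprod.desc A.arrow (imageSubobject u).arrow)) ≫
                biprod.desc A.arrow (imageSubobject u).arrow
              = (kernel.ι (factorThruImage (biprod.desc A.arrow (imageSubobject u).arrow)) ≫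
                  factorThruImage (biprod.desc A.arrow (imageSubobject u).arrow)) ≫
                  image.ι (biprod.desc A.arrow (imageSubobject u).arrow) := by
                rw [Category.assoc, image.fac]
            _ = 0 := by rw [kernel.condition, zero_comp]
        have hρ := kernel.lift_ι (biprod.desc A.arrow (imageSubobject u).arrow) _ hσφ
        rw [← hρ, Category.assoc,
          kernel_vanish A u h (imageSubobject u) (factorThruImageSubobject u) harr k hk
            (Abelian.epiDesc (factorThruImageSubobject u) k hκk) hk'
            (kernel.ι (biprod.desc A.arrow (imageSubobject u).arrow))
            (kernel.condition _),
          comp_zero]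
      -- build the enlarged extension
      have hdesc : factorThruImage (biprod.desc A.arrow (imageSubobject u).arrow) ≫
          Abelian.epiDesc (factorThruImage (biprod.desc A.arrow (imageSubobject u).arrow))
            _ hker2 = biprod.desc h (Abelian.epiDesc (factorThruImageSubobject u) k hκk) :=
        Abelian.comp_epiDesc _ _ _
      have hAA' : A ≤ Subobject.mk (image.ι (biprod.desc A.arrow (imageSubobject u).arrow)) :=
        Subobject.le_mk_of_comm
          (biprod.inl ≫ factorThruImage (biprod.desc A.arrow (imageSubobject u).arrow))
          (by rw [Category.assoc, image.fac, biprod.inl_desc])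
      have hIA' : imageSubobject u ≤
          Subobject.mk (image.ι (biprod.desc A.arrow (imageSubobject u).arrow)) :=
        Subobject.le_mk_of_comm
          (biprod.inr ≫ factorThruImage (biprod.desc A.arrow (imageSubobject u).arrow))
          (by rw [Category.assoc, image.fac, biprod.inr_desc])
      have hofLE : Subobject.ofLE A _ hAA' ≫
          ((Subobject.underlyingIso (image.ι (biprod.desc A.arrow (imageSubobject u).arrow))).hom ≫
            Abelian.epiDesc (factorThruImage (biprod.desc A.arrow (imageSubobject u).arrow))
              _ hker2) = h := by
        have heq : Subobject.ofLE A _ hAA' =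
            (biprod.inl ≫ factorThruImage (biprod.desc A.arrow (imageSubobject u).arrow)) ≫
              (Subobject.underlyingIso
                (image.ι (biprod.desc A.arrow (imageSubobject u).arrow))).inv := by
          rw [← cancel_mono (Subobject.mk
            (image.ι (biprod.desc A.arrow (imageSubobject u).arrow))).arrow]
          simp only [Subobject.ofLE_arrow, Category.assoc, Subobject.underlyingIso_arrow]
          rw [image.fac, biprod.inl_desc]
        rw [heq]
        simp only [Category.assoc, Iso.inv_hom_id_assoc]
        rw [hdesc, biprod.inl_desc]
      -- the enlarged extension
      set e' : PExt M f' g' :=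
        { A := Subobject.mk (image.ι (biprod.desc A.arrow (imageSubobject u).arrow))
          le := hle.trans hAA'
          h := (Subobject.underlyingIso
              (image.ι (biprod.desc A.arrow (imageSubobject u).arrow))).hom ≫
            Abelian.epiDesc (factorThruImage (biprod.desc A.arrow (imageSubobject u).arrow))
              _ hker2
          comm := by
            have hdec2 : Subobject.ofMkLE f' _ (hle.trans hAA') =
                Subobject.ofMkLE f' A hle ≫ Subobject.ofLE A _ hAA' := by
              rw [← cancel_mono (Subobject.mk
                (image.ι (biprod.desc A.arrow (imageSubobject u).arrow))).arrow]
              simp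
            rw [hdec2, Category.assoc, hofLE, hcomm] } with he'
      -- maximality gives A' ≤ A, hence u factors through A, contradiction
      have hle' : e' ≤ ⟨A, hle, h, hcomm⟩ := hmax ⟨hAA', hofLE⟩
      obtain ⟨hA'A, -⟩ := hle'
      have hIA : imageSubobject u ≤ A := le_trans hIA' hA'A
      apply hu
      have hfac : A.Factors ((factorThruImageSubobject u ≫
          Subobject.ofLE (imageSubobject u) A hIA) ≫ A.arrow) :=
        Subobject.factors_comp_arrow _
      rw [Category.assoc, Subobject.ofLE_arrow, harr] at hfac
      exact hfac
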